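/- arXiv:2403.06171 — 2 statements merged into one kernel-verified Lean document; each statement's English description precedes it below -/
import Mathlib

section
/- Let τ = (1,1̄)⋯(n,n̄) ∈ S_{2n} and let x_k and x_{k+1} = x_k·(i j) be elements of S_{2n}, where (i j) is a transposition with j ∉ {i, τ(i)}. Define δ_k = (τx_{k+1})τ(τx_{k+1})⁻¹ and δ_{k-1} = (τx_k)τ(τx_k)⁻¹. Then δ_{k-1}δ_k is a product of two disjoint transpositions (cd)(ab), where a = τx_k(i), b = τx_k(j), c = τx_kτ(i), d = τx_kτ(j), and a, b, c, d are pairwise distinct; in particular δ_{k-1}δ_k has cycle type [2,2,1^{2n-4}]. -/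
/-! With `y = τ x_k` and `σ = (i j)`, both involutions give
`δ_{k-1} δ_k = y τ σ τ σ y⁻¹ = (yτ σ (yτ)⁻¹)(y σ y⁻¹)`, and conjugating a transposition
relabels its two points, which yields `(c d)(a b)`. The points `a, b, c, d` are the images
under the bijection `y` of `i, j, τ i, τ j`, which are distinct because `τ` is a
fixed-point-free involution and `j ∉ {i, τ i}`. -/

open Equiv

theorem conj_mul_conj_mul_eq_of_mul_self_eq_one {G : Type*} [Group G] (g s t : G)
    (hs : s * s = 1) (ht : t * t = 1) :
    g * t * g⁻¹ * (g * s * t * (g * s)⁻¹) = g * t * s * (g * t)⁻¹ * (g * s * g⁻¹) := by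
  simp only [mul_inv_rev, inv_eq_of_mul_eq_one_right hs, inv_eq_of_mul_eq_one_right ht]
  group

theorem List.nodup_of_involutive_of_ne_self {α : Type*} {τ : α → α}
    (hτ : Function.Involutive τ) (hfree : ∀ x, τ x ≠ x) {i j : α} (hji : j ≠ i)
    (hjτ : j ≠ τ i) : [i, j, τ i, τ j].Nodup := by
  have hτj : τ j ≠ i := fun h => hjτ (by rw [← h, hτ])
  simp only [List.nodup_cons, List.mem_cons, List.not_mem_nil, or_false, not_or,
    List.nodup_nil, and_true, not_false_eq_true]
  exact ⟨⟨hji.symm, (hfree i).symm, hτj.symm⟩, ⟨hjτ, (hfree j).symm⟩,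
    fun h => hji (hτ.injective h).symm⟩

theorem stmt_4_general {α : Type*} [Fintype α] [DecidableEq α]
    (τ xk : Equiv.Perm α)
    (hτinv : τ * τ = 1) (hτfree : ∀ x : α, τ x ≠ x)
    (i j : α) (hji : j ≠ i) (hjτ : j ≠ τ i)
    (xk1 δk δkm1 : Equiv.Perm α)
    (hx : xk1 = xk * Equiv.swap i j)
    (hδk : δk = (τ * xk1) * τ * (τ * xk1)⁻¹)
    (hδkm1 : δkm1 = (τ * xk) * τ * (τ * xk)⁻¹)
    (a b c d : α)
    (ha : a = (τ * xk) i) (hb : b = (τ * xk) j)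
    (hc : c = (τ * xk * τ) i) (hd : d = (τ * xk * τ) j) :
    δkm1 * δk = Equiv.swap c d * Equiv.swap a b ∧
    ([a, b, c, d] : List α).Pairwise (· ≠ ·) ∧
    (δkm1 * δk).cycleType = {2, 2} := by
  have hτ : Function.Involutive τ := fun x => by rw [← Perm.mul_apply, hτinv, Perm.one_apply]
  have hnodup : [a, b, c, d].Nodup := by
    simpa [ha, hb, hc, hd] using
      (List.nodup_of_involutive_of_ne_self hτ hτfree hji hjτ).map (τ * xk).injective
  have hprod : δkm1 * δk = swap c d * swap a b := by
    rw [hδkm1, hδk, hx, ← mul_assoc τ xk, conj_mul_conj_mul_eq_of_mul_self_eq_one _ _ _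
      (swap_mul_self i j) hτinv, hc, hd, ha, hb, swap_apply_apply, swap_apply_apply]
  refine ⟨hprod, hnodup, ?_⟩
  rw [hprod]
  exact Perm.cycleType_swap_mul_swap_of_nodup
    ((List.perm_append_comm (l₁ := [a, b]) (l₂ := [c, d])).nodup_iff.mp hnodup)

/-- with `τ` the fixed-point-free involution `k ↔ k̄` of the `2n`-element
set, `x_{k+1} = x_k (i j)` with `j ∉ {i, τ i}`, and
`δ_k = (τ x_{k+1}) τ (τ x_{k+1})⁻¹`, `δ_{k-1} = (τ x_k) τ (τ x_k)⁻¹`, one has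
`δ_{k-1} δ_k = (c d)(a b)` where `a = τ x_k i`, `b = τ x_k j`, `c = τ x_k τ i`,
`d = τ x_k τ j` are pairwise distinct; in particular the cycle type of `δ_{k-1} δ_k`
is `[2, 2, 1^{2n-4}]`, i.e. its nontrivial cycle type is `{2, 2}`. -/
theorem stmt_4 {α : Type*} [Fintype α] [DecidableEq α] (n : ℕ)
    (hcard : Fintype.card α = 2 * n)
    (τ xk : Equiv.Perm α)
    (hτinv : τ * τ = 1) (hτfree : ∀ x : α, τ x ≠ x)
    (i j : α) (hji : j ≠ i) (hjτ : j ≠ τ i)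
    (xk1 δk δkm1 : Equiv.Perm α)
    (hx : xk1 = xk * Equiv.swap i j)
    (hδk : δk = (τ * xk1) * τ * (τ * xk1)⁻¹)
    (hδkm1 : δkm1 = (τ * xk) * τ * (τ * xk)⁻¹)
    (a b c d : α)
    (ha : a = (τ * xk) i) (hb : b = (τ * xk) j)
    (hc : c = (τ * xk * τ) i) (hd : d = (τ * xk * τ) j) :
    δkm1 * δk = Equiv.swap c d * Equiv.swap a b ∧
    ([a, b, c, d] : List α).Pairwise (· ≠ ·) ∧
    (δkm1 * δk).cycleType = {2, 2} :=
  stmt_4_general τ xk hτinv hτfree i j hji hjτ xk1 δk δkm1 hx hδk hδkm1 a b c d ha hb hc hd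
end

section
/- Let τ = (1,1̄)⋯(n,n̄) ∈ S_{2n} and let x_k ∈ S_{2n} be fixed. Suppose (ab)(cd) is a fixed product of two disjoint transpositions. Then there are exactly two transpositions (i j) with j ∉ {i, τ(i)} such that (τx_k)τ(τx_k)⁻¹ · (τx_k(ij))τ(τx_k(ij))⁻¹ = (cd)(ab), namely i = (x_k⁻¹τ)(a), j = (x_k⁻¹τ)(b) and i = (τx_k⁻¹τ)(a), j = (τx_k⁻¹τ)(b) (up to swapping i and j). -/
set_option linter.unusedTactic false in
set_option linter.unreachableTactic false in
lemma key_loc {α : Type*} [DecidableEq α] (u v u' v' a b : α)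
    (h1 : u' ≠ u) (h2 : u' ≠ v) (h3 : v' ≠ u) (h4 : v' ≠ v)
    (hab : a ≠ b)
    (h : (Equiv.swap u' v' * Equiv.swap u v) a = b) :
    (u = a ∧ v = b) ∨ (v = a ∧ u = b) ∨ (u' = a ∧ v' = b) ∨ (v' = a ∧ u' = b) := by
  simp only [Equiv.Perm.mul_apply, Equiv.swap_apply_def] at h
  split_ifs at h <;> simp_all <;> tauto

lemma swap_comm_disj {α : Type*} [DecidableEq α] (a b c d : α)
    (h1 : c ≠ a) (h2 : c ≠ b) (h3 : d ≠ a) (h4 : d ≠ b) :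
    Equiv.swap a b * Equiv.swap c d = Equiv.swap c d * Equiv.swap a b := by
  ext z
  simp only [Equiv.Perm.mul_apply, Equiv.swap_apply_def]
  split_ifs <;> simp_all


/-- with `τ` the fixed-point-free involution `k ↔ k̄` and `x = x_k` fixed,
and `(c d)(a b)` a fixed product of two disjoint transpositions arising as
`δ_{k-1} δ_k` (so that `c = δ_{k-1} a`, `d = δ_{k-1} b` where
`δ_{k-1} = (τ x) τ (τ x)⁻¹ = τ x τ x⁻¹ τ`), there are exactly two transpositions
`(i j)` with `j ∉ {i, τ i}` such that
`(τ x) τ (τ x)⁻¹ · (τ x (i j)) τ (τ x (i j))⁻¹ = (c d)(a b)`, namely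
`{i, j} = {(x⁻¹ τ) a, (x⁻¹ τ) b}` and `{i, j} = {(τ x⁻¹ τ) a, (τ x⁻¹ τ) b}`. -/
theorem stmt_6 {α : Type*} [Fintype α] [DecidableEq α] (n : ℕ)
    (hcard : Fintype.card α = 2 * n)
    (τ x : Equiv.Perm α)
    (hτinv : τ * τ = 1) (hτfree : ∀ y : α, τ y ≠ y)
    (a b c d : α)
    (hc : c = (τ * x * τ * x⁻¹ * τ) a) (hd : d = (τ * x * τ * x⁻¹ * τ) b)
    (hdistinct : ([a, b, c, d] : List α).Pairwise (· ≠ ·)) :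
    -- the two named transpositions are distinct, …
    Equiv.swap ((x⁻¹ * τ) a) ((x⁻¹ * τ) b) ≠
      Equiv.swap ((τ * x⁻¹ * τ) a) ((τ * x⁻¹ * τ) b) ∧
    -- … and a transposition `(i j)` with `j ∉ {i, τ i}` solves the equation iff it is
    -- one of the two:
    ∀ i j : α, j ≠ i → j ≠ τ i →
      ((((τ * x) * τ * (τ * x)⁻¹) *
          ((τ * x * Equiv.swap i j) * τ * (τ * x * Equiv.swap i j)⁻¹) =
            Equiv.swap c d * Equiv.swap a b) ↔
        (Equiv.swap i j = Equiv.swap ((x⁻¹ * τ) a) ((x⁻¹ * τ) b) ∨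
         Equiv.swap i j = Equiv.swap ((τ * x⁻¹ * τ) a) ((τ * x⁻¹ * τ) b))) := by
  have hττ : ∀ y, τ (τ y) = y := fun y => by
    have := congrArg (fun f : Equiv.Perm α => f y) hτinv
    simpa using this
  have hτ' : τ⁻¹ = τ := by
    rw [inv_eq_iff_mul_eq_one]; exact hτinv
  obtain ⟨⟨hab, hac, had⟩, ⟨hbc, hbd⟩, hcd⟩ :
      (a ≠ b ∧ a ≠ c ∧ a ≠ d) ∧ (b ≠ c ∧ b ≠ d) ∧ c ≠ d := by
    simpa [List.pairwise_cons] using hdistinct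
  set g : Equiv.Perm α := τ * x with hg
  set p : α := (x⁻¹ * τ) a with hp
  set q : α := (x⁻¹ * τ) b with hq
  have hgp : g p = a := by
    simp [hg, hp, Equiv.Perm.mul_apply, hττ]
  have hgq : g q = b := by
    simp [hg, hq, Equiv.Perm.mul_apply, hττ]
  have hτp : (τ * x⁻¹ * τ) a = τ p := by simp [hp, Equiv.Perm.mul_apply]
  have hτq : (τ * x⁻¹ * τ) b = τ q := by simp [hq, Equiv.Perm.mul_apply]
  have hgτp : g (τ p) = c := by
    simp [hg, hp, Equiv.Perm.mul_apply, hc]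
  have hgτq : g (τ q) = d := by
    simp [hg, hq, Equiv.Perm.mul_apply, hd]
  have hpq : p ≠ q := fun h => hab (by rw [← hgp, ← hgq, h])
  -- conjugation forms
  have hform1 : ∀ i j : α,
      ((τ * x) * τ * (τ * x)⁻¹) *
        ((τ * x * Equiv.swap i j) * τ * (τ * x * Equiv.swap i j)⁻¹)
      = g * (τ * Equiv.swap i j * τ * Equiv.swap i j) * g⁻¹ := by
    intro i j
    simp only [hg, mul_inv_rev, Equiv.swap_inv]
    group
  have hconj : ∀ u v : α,
      g * (τ * Equiv.swap u v * τ * Equiv.swap u v) * g⁻¹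
      = Equiv.swap (g (τ u)) (g (τ v)) * Equiv.swap (g u) (g v) := by
    intro u v
    rw [Equiv.swap_apply_apply g (τ u) (τ v), Equiv.swap_apply_apply g u v,
      Equiv.swap_apply_apply τ u v]
    simp only [hτ']
    group
  constructor
  · -- the two swaps are distinct
    rw [hτp, hτq]
    intro heq
    have h1 := congrArg (fun f : Equiv.Perm α => f (τ p)) heq
    simp only [Equiv.swap_apply_left] at h1
    by_cases h2 : τ p = p
    · exact hτfree p h2
    by_cases h3 : τ p = q
    · have : p = τ q := by rw [← h3, hττ]
      exact had (by rw [← hgp, this, hgτq])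
    · rw [Equiv.swap_apply_of_ne_of_ne h2 h3] at h1
      exact hpq (τ.injective h1)
  · intro i j hji hjτi
    constructor
    · intro h
      rw [hform1, hconj] at h
      have ha : (Equiv.swap (g (τ i)) (g (τ j)) * Equiv.swap (g i) (g j)) a = b := by
        rw [h]
        simp only [Equiv.Perm.mul_apply, Equiv.swap_apply_left]
        exact Equiv.swap_apply_of_ne_of_ne hbc hbd
      have hiτj : i ≠ τ j := fun h => hjτi (by rw [h, hττ])
      have := key_loc (g i) (g j) (g (τ i)) (g (τ j)) a b
        (fun h => hτfree i (g.injective h))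
        (fun h => hjτi (g.injective h).symm)
        (fun h => hiτj (g.injective h).symm)
        (fun h => hτfree j (g.injective h))
        hab ha
      rcases this with ⟨h1, h2⟩ | ⟨h1, h2⟩ | ⟨h1, h2⟩ | ⟨h1, h2⟩
      · left
        have hip : i = p := g.injective (by rw [h1, hgp])
        have hjq : j = q := g.injective (by rw [h2, hgq])
        rw [hip, hjq]
      · left
        have hiq : i = q := g.injective (by rw [h2, hgq])
        have hjp : j = p := g.injective (by rw [h1, hgp])
        rw [hiq, hjp, Equiv.swap_comm]
      · right
        have hip : i = τ p := by
          have : τ i = p := g.injective (by rw [h1, hgp])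
          rw [← this, hττ]
        have hjq : j = τ q := by
          have : τ j = q := g.injective (by rw [h2, hgq])
          rw [← this, hττ]
        rw [hip, hjq, hτp, hτq]
      · right
        have hiq : i = τ q := by
          have : τ i = q := g.injective (by rw [h2, hgq])
          rw [← this, hττ]
        have hjp : j = τ p := by
          have : τ j = p := g.injective (by rw [h1, hgp])
          rw [← this, hττ]
        rw [hiq, hjp, hτp, hτq, Equiv.swap_comm]
    · intro h
      rw [hform1]
      rcases h with h | h
      · rw [h, hconj, hgp, hgq, hgτp, hgτq]
      · rw [h, hτp, hτq, hconj, hττ, hττ, hgp, hgq, hgτp, hgτq]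
        exact swap_comm_disj a b c d hac.symm hbc.symm had.symm hbd.symm
end
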